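/- arXiv:2309.10866 — 2 statements merged into one kernel-verified Lean document; each statement's English description precedes it below -/
import Mathlib

section
/- If S is a subset of P^2(F_q) with |S| = q+2 and there exist two distinct points P, Q in S such that no line through P contains at least three points of S and no line through Q contains at least three points of S, then in suitable coordinates S equals S_f for some f(X) in F_q[X] which permutes F_q. -/
/-!
After a linear change of coordinates, `P = (1:0:0)` and `Q = (0:1:0)`. The line `Z = 0` through
both contains no further point of `S`, so the other `q` points are affine, `(c : d : 1)`. Every line
`X = cZ` passes through `Q` and every line `Y = dZ` through `P`, so distinct affine points of `S`
have distinct first and distinct second coordinates. Being `q` in number, they form the graph of a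
bijection `F → F`, and over a finite field every function is a polynomial function.
-/

open Polynomial

noncomputable section

lemma vec3_ne_zero_last {F : Type} [Field F] (c d : F) : ![c, d, 1] ≠ 0 := by
  intro h; have := congrFun h 2; simp at this

lemma vec3_e0_ne_zero {F : Type} [Field F] : (![1, 0, 0] : Fin 3 → F) ≠ 0 := by
  intro h; have := congrFun h 0; simp at this

lemma vec3_e1_ne_zero {F : Type} [Field F] : (![0, 1, 0] : Fin 3 → F) ≠ 0 := by
  intro h; have := congrFun h 1; simp at this

/-- The set `S_f = {(c : f(c) : 1) : c ∈ F_q} ∪ {(1:0:0), (0:1:0)}` in `ℙ²(F_q)`. -/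
def Sf {F : Type} [Field F] (f : Polynomial F) : Set (Projectivization F (Fin 3 → F)) :=
  {p | ∃ c : F, p = Projectivization.mk F ![c, f.eval c, 1] (vec3_ne_zero_last c (f.eval c))}
    ∪ {Projectivization.mk F ![1, 0, 0] vec3_e0_ne_zero,
       Projectivization.mk F ![0, 1, 0] vec3_e1_ne_zero}

open Module Projectivization
open scoped LinearAlgebra.Projectivization

section Lines

variable {K V : Type*} [DivisionRing K] [AddCommGroup V] [Module K V]

def AtMostTwoOnLinesThrough (S : Set (ℙ K V)) (R : ℙ K V) : Prop :=
  ∀ W : Submodule K V, finrank K W = 2 → R.submodule ≤ W → {x ∈ S | x.submodule ≤ W}.ncard ≤ 2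

theorem AtMostTwoOnLinesThrough.eq_of_le {S : Set (ℙ K V)} {R : ℙ K V}
    (h : AtMostTwoOnLinesThrough S R) (hS : S.Finite) (hR : R ∈ S)
    {W : Submodule K V} (hW : finrank K W = 2) (hRW : R.submodule ≤ W)
    {x y : ℙ K V} (hx : x ∈ S) (hy : y ∈ S) (hxW : x.submodule ≤ W) (hyW : y.submodule ≤ W)
    (hxR : x ≠ R) (hyR : y ≠ R) : x = y := by
  by_contra hxy
  have hsub : ({R, x, y} : Set (ℙ K V)) ⊆ {z ∈ S | z.submodule ≤ W} := by
    rintro z (rfl | rfl | rfl) <;> exact ⟨‹_›, ‹_›⟩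
  have := Set.ncard_le_ncard hsub (hS.subset (Set.sep_subset _ _))
  rw [Set.ncard_eq_three.mpr ⟨R, x, y, hxR.symm, hyR.symm, hxy, rfl⟩] at this
  linarith [h W hW hRW]

theorem submodule_map_linearEquiv {V' : Type*} [AddCommGroup V'] [Module K V']
    (g : V ≃ₗ[K] V') (x : ℙ K V) :
    (map g.toLinearMap g.injective x).submodule = x.submodule.map g.toLinearMap := by
  induction x using ind with
  | h v hv => rw [map_mk, submodule_mk, submodule_mk, Submodule.map_span, Set.image_singleton]

theorem AtMostTwoOnLinesThrough.image_map {V' : Type*} [AddCommGroup V'] [Module K V']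
    {S : Set (ℙ K V)} {R : ℙ K V} (h : AtMostTwoOnLinesThrough S R) (g : V ≃ₗ[K] V') :
    AtMostTwoOnLinesThrough (map g.toLinearMap g.injective '' S)
      (map g.toLinearMap g.injective R) := by
  intro W hW hRW
  have hle : ∀ x : ℙ K V, (map g.toLinearMap g.injective x).submodule ≤ W ↔
      x.submodule ≤ W.comap g.toLinearMap := fun x => by
    rw [submodule_map_linearEquiv, Submodule.map_le_iff_le_comap]
  have hW' : finrank K (W.comap g.toLinearMap) = 2 := by
    rw [Submodule.comap_equiv_eq_map_symm, LinearEquiv.finrank_map_eq, hW]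
  have himage : {y ∈ map g.toLinearMap g.injective '' S | y.submodule ≤ W} =
      map g.toLinearMap g.injective '' {x ∈ S | x.submodule ≤ W.comap g.toLinearMap} := by
    ext y
    constructor
    · rintro ⟨⟨x, hx, rfl⟩, hyW⟩
      exact ⟨x, ⟨hx, (hle x).mp hyW⟩, rfl⟩
    · rintro ⟨x, ⟨hx, hxW⟩, rfl⟩
      exact ⟨⟨x, hx, rfl⟩, (hle x).mpr hxW⟩
  rw [himage, Set.ncard_image_of_injective _ (Projectivization.map_injective _ _)]
  exact h _ hW' ((hle R).mp hRW)

end Lines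

theorem exists_bijective_eq_graph {α : Type*} [Finite α] {G : Set (α × α)}
    (hcard : G.ncard = Nat.card α) (hfst : G.InjOn Prod.fst) (hsnd : G.InjOn Prod.snd) :
    ∃ h : α → α, h.Bijective ∧ G = {p | p.2 = h p.1} := by
  let e : G ≃ α := Equiv.ofBijective (G.domRestrict Prod.fst)
    ((Nat.bijective_iff_injective_and_card _).mpr
      ⟨hfst.injective, by rw [Nat.card_coe_set_eq, hcard]⟩)
  have he : ∀ p : G, (e.symm (p : α × α).1 : α × α) = p := fun p =>
    congrArg Subtype.val (e.symm_apply_apply p)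
  refine ⟨fun a => (e.symm a : α × α).2,
    Finite.injective_iff_bijective.mp (hsnd.injective.comp e.symm.injective), ?_⟩
  ext p
  constructor
  · intro hp
    exact (congrArg Prod.snd (he ⟨p, hp⟩)).symm
  · intro hp
    have hp' : (e.symm p.1 : α × α) = p := Prod.ext (e.apply_symm_apply p.1) hp.symm
    exact hp' ▸ (e.symm p.1).2

theorem exists_polynomial_eval_eq {F : Type*} [Field F] [Fintype F] (h : F → F) :
    ∃ f : F[X], ∀ c, f.eval c = h c := by
  classical
  exact ⟨Lagrange.interpolate Finset.univ id h, fun c =>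
    Lagrange.eval_interpolate_at_node h (Set.injOn_id _) (Finset.mem_univ c)⟩

section PlaneCoordinates

variable {F : Type} [Field F]

def affinePoint (p : F × F) : ℙ F (Fin 3 → F) := mk F ![p.1, p.2, 1] (vec3_ne_zero_last p.1 p.2)

variable (F) in
def infPointX : ℙ F (Fin 3 → F) := mk F ![1, 0, 0] vec3_e0_ne_zero

variable (F) in
def infPointY : ℙ F (Fin 3 → F) := mk F ![0, 1, 0] vec3_e1_ne_zero

theorem affinePoint_injective : Function.Injective (affinePoint (F := F)) := by
  rintro ⟨a, b⟩ ⟨a', b'⟩ h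
  obtain ⟨u, hu⟩ := (mk_eq_mk_iff F _ _ _ _).mp h
  have h0 := congrFun hu 0
  have h1 := congrFun hu 1
  have h2 := congrFun hu 2
  simp only [Units.smul_def, Pi.smul_apply, Matrix.cons_val, smul_eq_mul, mul_one] at h0 h1 h2
  simp [← h0, ← h1, h2]

theorem infPointX_ne_infPointY : infPointX F ≠ infPointY F := by
  intro h
  obtain ⟨u, hu⟩ := (mk_eq_mk_iff F _ _ _ _).mp h
  simpa [Units.smul_def] using congrFun hu 0

theorem affinePoint_submodule_not_le_ker_proj (p : F × F) :
    ¬(affinePoint p).submodule ≤ LinearMap.ker (LinearMap.proj 2 : (Fin 3 → F) →ₗ[F] F) := by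
  simp [affinePoint]

theorem affinePoint_ne_infPointX (p : F × F) : affinePoint p ≠ infPointX F :=
  fun h => affinePoint_submodule_not_le_ker_proj p (h ▸ by simp [infPointX])

theorem affinePoint_ne_infPointY (p : F × F) : affinePoint p ≠ infPointY F :=
  fun h => affinePoint_submodule_not_le_ker_proj p (h ▸ by simp [infPointY])

theorem mem_range_affinePoint_of_not_le_ker_proj {x : ℙ F (Fin 3 → F)}
    (hx : ¬x.submodule ≤ LinearMap.ker (LinearMap.proj 2 : (Fin 3 → F) →ₗ[F] F)) :
    x ∈ Set.range affinePoint := by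
  induction x using ind with
  | h v hv =>
    have hv2 : v 2 ≠ 0 := by simpa using hx
    refine ⟨(v 0 / v 2, v 1 / v 2), ((mk_eq_mk_iff F _ _ _ _).mpr ⟨Units.mk0 (v 2) hv2, ?_⟩).symm⟩
    funext i
    fin_cases i <;> simp [Units.smul_def, mul_div_cancel₀ _ hv2]

theorem finrank_ker_eq_two (φ : (Fin 3 → F) →ₗ[F] F) {v : Fin 3 → F} (hv : φ v ≠ 0) :
    finrank F (LinearMap.ker φ) = 2 := by
  have hφ : φ ≠ 0 := fun h => hv (by simp [h])
  have := Module.Dual.finrank_ker_add_one_of_ne_zero hφ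
  simp only [finrank_fin_fun] at this
  omega

end PlaneCoordinates

section NormalForm

variable {F : Type} [Field F] {S : Set (ℙ F (Fin 3 → F))}

theorem eq_image_affinePoint_union (hS : S.Finite) (hX : infPointX F ∈ S)
    (hY : infPointY F ∈ S) (hlineX : AtMostTwoOnLinesThrough S (infPointX F)) :
    S = affinePoint '' (affinePoint ⁻¹' S) ∪ {infPointX F, infPointY F} := by
  refine (Set.union_subset (Set.image_preimage_subset _ _)
    (Set.insert_subset hX (Set.singleton_subset_iff.mpr hY))).antisymm' fun x hx => ?_
  by_cases hxinf : x.submodule ≤ LinearMap.ker (LinearMap.proj 2 : (Fin 3 → F) →ₗ[F] F)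
  · by_cases hxX : x = infPointX F
    · exact Or.inr (Or.inl hxX)
    refine Or.inr (Or.inr (hlineX.eq_of_le hS hX (finrank_ker_eq_two _ (v := ![0, 0, 1]) ?_)
      ?_ hx hY hxinf ?_ hxX infPointX_ne_infPointY.symm))
    all_goals simp [infPointX, infPointY]
  · obtain ⟨p, rfl⟩ := mem_range_affinePoint_of_not_le_ker_proj hxinf
    exact Or.inl ⟨p, hx, rfl⟩

theorem injOn_fst_preimage_affinePoint (hS : S.Finite) (hY : infPointY F ∈ S)
    (hlineY : AtMostTwoOnLinesThrough S (infPointY F)) :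
    (affinePoint ⁻¹' S).InjOn Prod.fst := by
  rintro p hp p' hp' h
  let φ : (Fin 3 → F) →ₗ[F] F := LinearMap.proj 0 - p.1 • LinearMap.proj 2
  have hline : ∀ q : F × F, q.1 = p.1 → (affinePoint q).submodule ≤ LinearMap.ker φ := by
    rintro q hq
    simp [affinePoint, φ, hq]
  refine affinePoint_injective (hlineY.eq_of_le hS hY (finrank_ker_eq_two φ (v := ![1, 0, 0])
    (by simp [φ])) (by simp [infPointY, φ]) hp hp' (hline p rfl) (hline p' h.symm)
    (affinePoint_ne_infPointY p) (affinePoint_ne_infPointY p'))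

theorem injOn_snd_preimage_affinePoint (hS : S.Finite) (hX : infPointX F ∈ S)
    (hlineX : AtMostTwoOnLinesThrough S (infPointX F)) :
    (affinePoint ⁻¹' S).InjOn Prod.snd := by
  rintro p hp p' hp' h
  let φ : (Fin 3 → F) →ₗ[F] F := LinearMap.proj 1 - p.2 • LinearMap.proj 2
  have hline : ∀ q : F × F, q.2 = p.2 → (affinePoint q).submodule ≤ LinearMap.ker φ := by
    rintro q hq
    simp [affinePoint, φ, hq]
  refine affinePoint_injective (hlineX.eq_of_le hS hX (finrank_ker_eq_two φ (v := ![0, 1, 0])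
    (by simp [φ])) (by simp [infPointX, φ]) hp hp' (hline p rfl) (hline p' h.symm)
    (affinePoint_ne_infPointX p) (affinePoint_ne_infPointX p'))

end NormalForm

theorem exists_eq_Sf_of_infPoints {F : Type} [Field F] [Fintype F] {S : Set (ℙ F (Fin 3 → F))}
    (hcard : S.ncard = Fintype.card F + 2) (hX : infPointX F ∈ S) (hY : infPointY F ∈ S)
    (hlineX : AtMostTwoOnLinesThrough S (infPointX F))
    (hlineY : AtMostTwoOnLinesThrough S (infPointY F)) :
    ∃ f : F[X], S = Sf f ∧ Function.Bijective fun x : F => f.eval x := by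
  have hS : S.Finite := S.toFinite
  have hsplit := eq_image_affinePoint_union hS hX hY hlineX
  have hdisj : Disjoint (affinePoint '' (affinePoint ⁻¹' S)) {infPointX F, infPointY F} := by
    refine Set.disjoint_left.mpr ?_
    rintro _ ⟨p, -, rfl⟩ (h | h)
    exacts [affinePoint_ne_infPointX p h, affinePoint_ne_infPointY p h]
  have hG : (affinePoint ⁻¹' S).ncard = Nat.card F := by
    have := congrArg Set.ncard hsplit
    rw [Set.ncard_union_eq hdisj, Set.ncard_image_of_injective _ affinePoint_injective,
      Set.ncard_pair infPointX_ne_infPointY, hcard] at this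
    rw [Nat.card_eq_fintype_card]
    omega
  obtain ⟨h, hbij, hgraph⟩ := exists_bijective_eq_graph hG
    (injOn_fst_preimage_affinePoint hS hY hlineY) (injOn_snd_preimage_affinePoint hS hX hlineX)
  obtain ⟨f, hf⟩ := exists_polynomial_eval_eq h
  refine ⟨f, ?_, by simpa only [hf] using hbij⟩
  rw [hsplit, hgraph, Sf]
  congr 1
  ext x
  simp [affinePoint, hf, eq_comm]

theorem exists_linearEquiv_map_eq_infPoints {F : Type} [Field F] {P Q : ℙ F (Fin 3 → F)}
    (hPQ : P ≠ Q) : ∃ g : (Fin 3 → F) ≃ₗ[F] (Fin 3 → F),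
      map g.toLinearMap g.injective P = infPointX F ∧
      map g.toLinearMap g.injective Q = infPointY F := by
  classical
  obtain ⟨w, hw⟩ := exists_linearIndependent_snoc_of_lt_finrank
    (linearIndependent_pair_iff_ne.mpr hPQ) (by simp)
  have hcard : Fintype.card (Fin 3) = finrank F (Fin 3 → F) := by simp
  let b := basisOfLinearIndependentOfCardEqFinrank hw hcard
  have hbP : b 0 = P.rep := by simp [b]
  have hbQ : b 1 = Q.rep := by simp [b]
  have hmap : ∀ (R : ℙ F (Fin 3 → F)) (i : Fin 3) (v : Fin 3 → F) (hv : v ≠ 0), b i = R.rep →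
      (∀ j, v j = if i = j then 1 else 0) →
      map b.equivFun.toLinearMap b.equivFun.injective R = mk F v hv := by
    intro R i v hv hi hvi
    conv_lhs => rw [← R.mk_rep]
    rw [map_mk]
    congr 1
    funext j
    rw [LinearEquiv.coe_coe, ← hi, Basis.equivFun_self, hvi]
  exact ⟨b.equivFun, hmap P 0 _ _ hbP fun j => by fin_cases j <;> simp,
    hmap Q 1 _ _ hbQ fun j => by fin_cases j <;> simp⟩

theorem statement1 (F : Type) [Field F] [Fintype F]
    (S : Set (Projectivization F (Fin 3 → F)))
    (hcard : S.ncard = Fintype.card F + 2)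
    (P Q : Projectivization F (Fin 3 → F)) (hP : P ∈ S) (hQ : Q ∈ S) (hPQ : P ≠ Q)
    (hlineP : ∀ W : Submodule F (Fin 3 → F), Module.finrank F W = 2 →
      P.submodule ≤ W → {x ∈ S | x.submodule ≤ W}.ncard ≤ 2)
    (hlineQ : ∀ W : Submodule F (Fin 3 → F), Module.finrank F W = 2 →
      Q.submodule ≤ W → {x ∈ S | x.submodule ≤ W}.ncard ≤ 2) :
    ∃ (f : Polynomial F) (g : (Fin 3 → F) ≃ₗ[F] (Fin 3 → F)),
      Projectivization.map g.toLinearMap g.injective '' S = Sf f ∧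
      Function.Bijective fun x : F => f.eval x := by
  obtain ⟨g, hgP, hgQ⟩ := exists_linearEquiv_map_eq_infPoints hPQ
  have hlineX := AtMostTwoOnLinesThrough.image_map hlineP g
  have hlineY := AtMostTwoOnLinesThrough.image_map hlineQ g
  rw [hgP] at hlineX
  rw [hgQ] at hlineY
  obtain ⟨f, hSf, hbij⟩ := exists_eq_Sf_of_infPoints
    (by rw [Set.ncard_image_of_injective _ (Projectivization.map_injective _ _), hcard])
    (hgP ▸ Set.mem_image_of_mem _ hP) (hgQ ▸ Set.mem_image_of_mem _ hQ) hlineX hlineY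
  exact ⟨f, g, hSf, hbij⟩
end
end

section
/- Let q > 2 be a prime power, f(X) in F_q[X] with deg(f) < q, and a in F_q. Then the polynomial (f(X+a) - f(a))/X permutes F_q if and only if each line passing through the point (a : f(a) : 1) contains at most two points of S_f \ {(1:0:0)}. -/
open Polynomial

noncomputable section

lemma proj_last_one_inj {F : Type} [Field F] {c y c' y' : F}
    (h : Projectivization.mk F ![c, y, 1] (vec3_ne_zero_last c y)
       = Projectivization.mk F ![c', y', 1] (vec3_ne_zero_last c' y')) : c = c' ∧ y = y' := by
  rw [Projectivization.mk_eq_mk_iff'] at h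
  obtain ⟨t, ht⟩ := h
  have h2 := congrFun ht 2
  simp [Pi.smul_apply] at h2
  subst h2
  have h0 := congrFun ht 0
  have h1 := congrFun ht 1
  simp at h0 h1
  exact ⟨h0.symm, h1.symm⟩

lemma proj_ne_e0 {F : Type} [Field F] (c y : F) :
    Projectivization.mk F ![c, y, 1] (vec3_ne_zero_last c y)
      ≠ Projectivization.mk F ![1, 0, 0] vec3_e0_ne_zero := by
  intro h
  rw [Projectivization.mk_eq_mk_iff'] at h
  obtain ⟨t, ht⟩ := h
  have := congrFun ht 2
  simp at this

lemma proj_ne_e1 {F : Type} [Field F] (c y : F) :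
    Projectivization.mk F ![c, y, 1] (vec3_ne_zero_last c y)
      ≠ Projectivization.mk F ![0, 1, 0] vec3_e1_ne_zero := by
  intro h
  rw [Projectivization.mk_eq_mk_iff'] at h
  obtain ⟨t, ht⟩ := h
  have := congrFun ht 2
  simp at this

lemma e1_ne_e0 {F : Type} [Field F] :
    (Projectivization.mk F ![0, 1, 0] vec3_e1_ne_zero : Projectivization F (Fin 3 → F))
      ≠ Projectivization.mk F ![1, 0, 0] vec3_e0_ne_zero := by
  intro h
  rw [Projectivization.mk_eq_mk_iff'] at h
  obtain ⟨t, ht⟩ := h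
  have := congrFun ht 1
  simp at this

lemma submodule_le_iff' {F : Type} [Field F] (v : Fin 3 → F) (hv : v ≠ 0)
    (W : Submodule F (Fin 3 → F)) :
    (Projectivization.mk F v hv).submodule ≤ W ↔ v ∈ W := by
  rw [Projectivization.submodule_mk, Submodule.span_singleton_le_iff_mem]

lemma det_zero_of_mem {F : Type} [Field F] (W : Submodule F (Fin 3 → F))
    (hW : Module.finrank F W = 2) (v : Fin 3 → (Fin 3 → F)) (hv : ∀ i, v i ∈ W) :
    (Matrix.of v).det = 0 := by
  by_contra h
  have hU : IsUnit (Matrix.of v) := (Matrix.isUnit_iff_isUnit_det _).2 (isUnit_iff_ne_zero.2 h)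
  have hLI : LinearIndependent F (fun i => (Matrix.of v) i) :=
    Matrix.linearIndependent_rows_iff_isUnit.2 hU
  have hLI2 : LinearIndependent F (fun i => (⟨v i, hv i⟩ : W)) :=
    LinearIndependent.of_comp W.subtype hLI
  have := hLI2.fintype_card_le_finrank
  simp [hW] at this

lemma span_pair_rank_two {F : Type} [Field F] {u v : Fin 3 → F}
    (h : LinearIndependent F ![u, v]) :
    Module.finrank F (Submodule.span F {u, v}) = 2 := by
  have h2 : Set.range ![u, v] = {u, v} := by
    simp [Matrix.range_cons, Matrix.range_empty, Set.pair_comm v u]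
  have := finrank_span_eq_card h
  rw [h2] at this
  simpa using this

theorem statement3 (F : Type) [Field F] [Fintype F] (hq : 2 < Fintype.card F)
    (f : Polynomial F) (hdeg : f.natDegree < Fintype.card F) (a : F) :
    Function.Bijective
        (fun x : F =>
          ((f.comp (Polynomial.X + Polynomial.C a) - Polynomial.C (f.eval a)) /
              Polynomial.X).eval x) ↔
      ∀ W : Submodule F (Fin 3 → F), Module.finrank F W = 2 →
        (Projectivization.mk F ![a, f.eval a, 1]
            (vec3_ne_zero_last a (f.eval a))).submodule ≤ W →
        {x ∈ Sf f \ {Projectivization.mk F ![1, 0, 0] vec3_e0_ne_zero} |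
            x.submodule ≤ W}.ncard ≤ 2 := by
  classical
  set g : Polynomial F := (f.comp (X + C a) - C (f.eval a)) / X with hgdef
  have hpX : (X : F[X]) ∣ (f.comp (X + C a) - C (f.eval a)) := by
    rw [Polynomial.X_dvd_iff]
    simp [coeff_zero_eq_eval_zero, eval_comp]
  have hXg : (X : F[X]) * g = f.comp (X + C a) - C (f.eval a) :=
    EuclideanDomain.mul_div_cancel' X_ne_zero hpX
  have key : ∀ c : F, f.eval c - f.eval a = (c - a) * g.eval (c - a) := by
    intro c
    have h := congrArg (Polynomial.eval (c - a)) hXg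
    simp [eval_comp, sub_add_cancel] at h
    linear_combination -h
  constructor
  · -- bijective → line condition
    intro hbij W hW hPW
    have hginj : Function.Injective fun x : F => g.eval x := hbij.injective
    rw [submodule_le_iff'] at hPW
    by_cases he1 : ![0, 1, 0] ∈ W
    · have hsub : {x ∈ Sf f \ {Projectivization.mk F ![1, 0, 0] vec3_e0_ne_zero} |
            x.submodule ≤ W} ⊆
          {Projectivization.mk F ![a, f.eval a, 1] (vec3_ne_zero_last a (f.eval a)),
           Projectivization.mk F ![0, 1, 0] vec3_e1_ne_zero} := by
        rintro x ⟨⟨hx, hx0⟩, hxW⟩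
        simp only [Sf, Set.mem_union, Set.mem_setOf_eq, Set.mem_insert_iff,
          Set.mem_singleton_iff] at hx
        rcases hx with ⟨c, rfl⟩ | he0 | he1'
        · left
          rw [submodule_le_iff'] at hxW
          have hdet := det_zero_of_mem W hW ![![a, f.eval a, 1], ![0, 1, 0], ![c, f.eval c, 1]]
            (by intro i; fin_cases i <;> assumption)
          rw [Matrix.det_fin_three] at hdet
          simp [Matrix.vecHead, Matrix.vecTail] at hdet
          have hca : c = a := by linear_combination -hdet
          subst hca; rfl
        · exact absurd he0 (by simpa using hx0)
        · right; rw [he1']; rfl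
      refine le_trans (Set.ncard_le_ncard hsub (Set.toFinite _)) ?_
      exact le_trans (Set.ncard_insert_le _ _) (by simp)
    · by_cases hc0 : ∃ c, c ≠ a ∧ ![c, f.eval c, 1] ∈ W
      · obtain ⟨c₀, hc₀a, hc₀W⟩ := hc0
        have hsub : {x ∈ Sf f \ {Projectivization.mk F ![1, 0, 0] vec3_e0_ne_zero} |
              x.submodule ≤ W} ⊆
            {Projectivization.mk F ![a, f.eval a, 1] (vec3_ne_zero_last a (f.eval a)),
             Projectivization.mk F ![c₀, f.eval c₀, 1] (vec3_ne_zero_last c₀ (f.eval c₀))} := by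
          rintro x ⟨⟨hx, hx0⟩, hxW⟩
          simp only [Sf, Set.mem_union, Set.mem_setOf_eq, Set.mem_insert_iff,
            Set.mem_singleton_iff] at hx
          rcases hx with ⟨c, rfl⟩ | he0 | he1'
          · rw [submodule_le_iff'] at hxW
            by_cases hca : c = a
            · left; subst hca; rfl
            · right
              have hdet := det_zero_of_mem W hW
                ![![a, f.eval a, 1], ![c₀, f.eval c₀, 1], ![c, f.eval c, 1]]
                (by intro i; fin_cases i <;> assumption)
              rw [Matrix.det_fin_three] at hdet
              simp [Matrix.vecHead, Matrix.vecTail] at hdet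
              have k1 := key c
              have k2 := key c₀
              have hgg : (c₀ - a) * ((c - a) * (g.eval (c - a) - g.eval (c₀ - a))) = 0 := by
                linear_combination hdet + (a - c₀) * k1 + (c - a) * k2
              rcases mul_eq_zero.1 hgg with h | h
              · exact absurd (by linear_combination h) hc₀a
              rcases mul_eq_zero.1 h with h | h
              · exact absurd (by linear_combination h) hca
              have hcc : c - a = c₀ - a := hginj (sub_eq_zero.1 h)
              have : c = c₀ := by linear_combination hcc
              subst this; rfl
          · exact absurd he0 (by simpa using hx0)
          · rw [he1', submodule_le_iff'] at hxW
            exact absurd hxW he1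
        refine le_trans (Set.ncard_le_ncard hsub (Set.toFinite _)) ?_
        exact le_trans (Set.ncard_insert_le _ _) (by simp)
      · push_neg at hc0
        have hsub : {x ∈ Sf f \ {Projectivization.mk F ![1, 0, 0] vec3_e0_ne_zero} |
              x.submodule ≤ W} ⊆
            {Projectivization.mk F ![a, f.eval a, 1] (vec3_ne_zero_last a (f.eval a))} := by
          rintro x ⟨⟨hx, hx0⟩, hxW⟩
          simp only [Sf, Set.mem_union, Set.mem_setOf_eq, Set.mem_insert_iff,
            Set.mem_singleton_iff] at hx
          rcases hx with ⟨c, rfl⟩ | he0 | he1'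
          · rw [submodule_le_iff'] at hxW
            have hca : c = a := by
              by_contra hca
              exact hc0 c hca hxW
            subst hca; rfl
          · exact absurd he0 (by simpa using hx0)
          · rw [he1', submodule_le_iff'] at hxW
            exact absurd hxW he1
        refine le_trans (Set.ncard_le_ncard hsub (Set.toFinite _)) ?_
        simp
  · -- line condition → bijective
    intro hline
    haveI hfinP : Finite (Projectivization F (Fin 3 → F)) := Quotient.finite _
    have hinj0 : ∀ x y : F, x ≠ 0 → y ≠ 0 → g.eval x = g.eval y → x = y := by
      intro x y hx hy hgxy
      by_contra hne
      have hLI : LinearIndependent F ![![a, f.eval a, 1], ![a + x, f.eval (a + x), 1]] := by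
        rw [LinearIndependent.pair_iff]
        intro s t hst
        have h2 := congrFun hst 2
        have h0 := congrFun hst 0
        simp at h2 h0
        have ht : t = 0 := by
          have : t * x = 0 := by linear_combination h0 - a * h2
          rcases mul_eq_zero.1 this with h | h
          · exact h
          · exact absurd h hx
        refine ⟨?_, ht⟩
        rw [ht] at h2; linear_combination h2
      set W := Submodule.span F {![a, f.eval a, 1], ![a + x, f.eval (a + x), 1]} with hWdef
      have hW2 : Module.finrank F W = 2 := span_pair_rank_two hLI
      have huW : ![a, f.eval a, 1] ∈ W := Submodule.subset_span (by simp)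
      have hvW : ![a + x, f.eval (a + x), 1] ∈ W := Submodule.subset_span (by simp)
      have k1 := key (a + x)
      have k2 := key (a + y)
      rw [add_sub_cancel_left] at k1 k2
      have hwW : ![a + y, f.eval (a + y), 1] ∈ W := by
        rw [hWdef]
        refine Submodule.mem_span_pair.2 ⟨1 - y / x, y / x, ?_⟩
        funext i
        fin_cases i
        · simp only [Pi.add_apply, Pi.smul_apply, smul_eq_mul]
          simp
          field_simp
          ring
        · simp only [Pi.add_apply, Pi.smul_apply, smul_eq_mul]
          simp
          field_simp
          linear_combination y * k1 - x * k2 + x * y * hgxy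
        · simp only [Pi.add_apply, Pi.smul_apply, smul_eq_mul]
          simp
      have hle : (Projectivization.mk F ![a, f.eval a, 1]
          (vec3_ne_zero_last a (f.eval a))).submodule ≤ W := (submodule_le_iff' _ _ _).2 huW
      have h3 := hline W hW2 hle
      have hd1 : Projectivization.mk F ![a, f.eval a, 1] (vec3_ne_zero_last a (f.eval a))
          ≠ Projectivization.mk F ![a + x, f.eval (a + x), 1]
            (vec3_ne_zero_last (a + x) (f.eval (a + x))) := by
        intro h
        have := (proj_last_one_inj h).1
        apply hx; linear_combination -this
      have hd2 : Projectivization.mk F ![a, f.eval a, 1] (vec3_ne_zero_last a (f.eval a))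
          ≠ Projectivization.mk F ![a + y, f.eval (a + y), 1]
            (vec3_ne_zero_last (a + y) (f.eval (a + y))) := by
        intro h
        have := (proj_last_one_inj h).1
        apply hy; linear_combination -this
      have hd3 : Projectivization.mk F ![a + x, f.eval (a + x), 1]
            (vec3_ne_zero_last (a + x) (f.eval (a + x)))
          ≠ Projectivization.mk F ![a + y, f.eval (a + y), 1]
            (vec3_ne_zero_last (a + y) (f.eval (a + y))) := by
        intro h
        have := (proj_last_one_inj h).1
        apply hne; linear_combination this
      have htrip : ({Projectivization.mk F ![a, f.eval a, 1] (vec3_ne_zero_last a (f.eval a)),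
          Projectivization.mk F ![a + x, f.eval (a + x), 1]
            (vec3_ne_zero_last (a + x) (f.eval (a + x))),
          Projectivization.mk F ![a + y, f.eval (a + y), 1]
            (vec3_ne_zero_last (a + y) (f.eval (a + y)))} : Set _) ⊆
          {x ∈ Sf f \ {Projectivization.mk F ![1, 0, 0] vec3_e0_ne_zero} |
            x.submodule ≤ W} := by
        rintro p (rfl | rfl | rfl)
        · exact ⟨⟨Or.inl ⟨a, rfl⟩, by simpa using proj_ne_e0 a (f.eval a)⟩,
            (submodule_le_iff' _ _ _).2 huW⟩
        · exact ⟨⟨Or.inl ⟨a + x, rfl⟩, by simpa using proj_ne_e0 (a + x) (f.eval (a + x))⟩,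
            (submodule_le_iff' _ _ _).2 hvW⟩
        · exact ⟨⟨Or.inl ⟨a + y, rfl⟩, by simpa using proj_ne_e0 (a + y) (f.eval (a + y))⟩,
            (submodule_le_iff' _ _ _).2 hwW⟩
      have hcard3 : ({Projectivization.mk F ![a, f.eval a, 1] (vec3_ne_zero_last a (f.eval a)),
          Projectivization.mk F ![a + x, f.eval (a + x), 1]
            (vec3_ne_zero_last (a + x) (f.eval (a + x))),
          Projectivization.mk F ![a + y, f.eval (a + y), 1]
            (vec3_ne_zero_last (a + y) (f.eval (a + y)))} : Set _).ncard = 3 := by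
        rw [Set.ncard_insert_of_notMem (by simp [hd1, hd2]) (Set.toFinite _),
          Set.ncard_pair hd3]
      have h33 := Set.ncard_le_ncard htrip (Set.toFinite _)
      rw [hcard3] at h33
      exact absurd (h33.trans h3) (by norm_num)
    -- degree bound
    have hdegg : g.natDegree < Fintype.card F - 1 := by
      rcases eq_or_ne g 0 with h0 | h0
      · rw [h0, natDegree_zero]; omega
      · have h1 : ((X : F[X]) * g).natDegree = 1 + g.natDegree := by
          rw [natDegree_mul X_ne_zero h0, natDegree_X]
        have h2 : ((X : F[X]) * g).natDegree ≤ f.natDegree := by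
          rw [hXg]
          refine le_trans (natDegree_sub_le _ _) ?_
          simp [natDegree_comp]
        omega
    have hsum : ∑ x : F, g.eval x = 0 := by
      have hev : ∀ x : F, g.eval x =
          ∑ k ∈ Finset.range (g.natDegree + 1), g.coeff k * x ^ k :=
        fun x => eval_eq_sum_range x
      calc ∑ x : F, g.eval x
          = ∑ x : F, ∑ k ∈ Finset.range (g.natDegree + 1), g.coeff k * x ^ k := by
            exact Finset.sum_congr rfl fun x _ => hev x
        _ = ∑ k ∈ Finset.range (g.natDegree + 1), ∑ x : F, g.coeff k * x ^ k :=
            Finset.sum_comm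
        _ = 0 := by
            apply Finset.sum_eq_zero
            intro k hk
            rw [← Finset.mul_sum, FiniteField.sum_pow_lt_card_sub_one (K := F) k
              (by simp only [Finset.mem_range] at hk; omega), mul_zero]
    set s : Finset F := Finset.univ.erase 0 with hs
    have hinjOn : ∀ x ∈ s, ∀ y ∈ s, g.eval x = g.eval y → x = y := by
      intro x hx y hy h
      exact hinj0 x y (Finset.ne_of_mem_erase hx) (Finset.ne_of_mem_erase hy) h
    set T : Finset F := s.image (fun x => g.eval x) with hT
    have hcards : s.card = Fintype.card F - 1 := by
      rw [hs, Finset.card_erase_of_mem (Finset.mem_univ _), Finset.card_univ]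
    have hcardT : T.card = Fintype.card F - 1 := by
      rw [hT, Finset.card_image_of_injOn hinjOn, hcards]
    obtain ⟨m₀, hm₀⟩ : ∃ m₀ : F, m₀ ∉ T := by
      by_contra h
      push_neg at h
      have hTu : T = Finset.univ := Finset.eq_univ_iff_forall.2 h
      rw [hTu, Finset.card_univ] at hcardT
      omega
    have hTer : T = Finset.univ.erase m₀ := by
      apply Finset.eq_of_subset_of_card_le
      · intro t ht
        exact Finset.mem_erase.2 ⟨fun h => hm₀ (h ▸ ht), Finset.mem_univ _⟩
      · rw [Finset.card_erase_of_mem (Finset.mem_univ _), Finset.card_univ, hcardT]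
    have hsum_univ : ∑ x : F, x = 0 := by
      have := FiniteField.sum_pow_lt_card_sub_one (K := F) 1 (by omega)
      simpa using this
    have hsumT : ∑ t ∈ T, t = -m₀ := by
      rw [hTer]
      have h := Finset.add_sum_erase Finset.univ (fun x : F => x) (Finset.mem_univ m₀)
      rw [hsum_univ] at h
      linear_combination h
    have hg0 : g.eval 0 = m₀ := by
      have h1 : ∑ t ∈ T, t = ∑ x ∈ s, g.eval x := by
        rw [hT]; exact Finset.sum_image hinjOn
      have h2 := Finset.add_sum_erase Finset.univ (fun x : F => g.eval x) (Finset.mem_univ (0 : F))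
      rw [hsum] at h2
      rw [← hs] at h2
      rw [← h1, hsumT] at h2
      linear_combination h2
    have hinj : Function.Injective fun x : F => g.eval x := by
      intro x y h
      simp only at h
      rcases eq_or_ne x 0 with rfl | hx
      · rcases eq_or_ne y 0 with rfl | hy
        · rfl
        · exfalso
          apply hm₀
          rw [← hg0, h]
          exact Finset.mem_image.2 ⟨y, Finset.mem_erase.2 ⟨hy, Finset.mem_univ _⟩, rfl⟩
      · rcases eq_or_ne y 0 with rfl | hy
        · exfalso
          apply hm₀
          rw [← hg0, ← h]
          exact Finset.mem_image.2 ⟨x, Finset.mem_erase.2 ⟨hx, Finset.mem_univ _⟩, rfl⟩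
        · exact hinj0 x y hx hy h
    exact Finite.injective_iff_bijective.1 hinj
end
end
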